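/- Let ℓ ≥ 2, k₁ ≥ 1 and k₂ ≥ 0 be integers and n ≥ ℓk₁ + k₂ − 1. Then the graph K_{ℓk₁+k₂−1} ∨ K̄_{n−ℓk₁−k₂+1} contains no subgraph isomorphic to k₁P_{2ℓ} ∪ k₂S_{2ℓ−1}. -/

import Mathlib

open SimpleGraph

/-- The number of edges of a simple graph. -/
noncomputable def edgeCount {V : Type*} (G : SimpleGraph V) : ℕ :=
  Nat.card G.edgeSet

/-- `Contains G H` means `G` contains a subgraph isomorphic to `H`,
i.e. there is an injective graph homomorphism from `H` to `G`. -/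
def Contains {V W : Type*} (G : SimpleGraph V) (H : SimpleGraph W) : Prop :=
  ∃ f : H →g G, Function.Injective f

/-- The Turán number `ex(n, H)`: the maximum number of edges of a simple graph on `n`
vertices containing no subgraph isomorphic to `H`. -/
noncomputable def exNum (n : ℕ) {W : Type*} (H : SimpleGraph W) : ℕ :=
  sSup {m : ℕ | ∃ G : SimpleGraph (Fin n), ¬ Contains G H ∧ edgeCount G = m}

/-- The disjoint union of `k` copies of `G`. -/
def copies {V : Type*} (k : ℕ) (G : SimpleGraph V) : SimpleGraph (Fin k × V) where
  Adj u v := u.1 = v.1 ∧ G.Adj u.2 v.2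
  symm.symm u v h := ⟨h.1.symm, G.adj_symm h.2⟩
  loopless.irrefl u h := G.irrefl h.2

/-- The join `G ∨ H` of two graphs: their disjoint union together with all edges
between the two vertex sets. -/
def graphJoin {V W : Type*} (G : SimpleGraph V) (H : SimpleGraph W) : SimpleGraph (V ⊕ W) where
  Adj u v := (G.sum H).Adj u v ∨ (u.isLeft ∧ v.isRight) ∨ (u.isRight ∧ v.isLeft)
  symm.symm u v h := by
    rcases h with h | ⟨h1, h2⟩ | ⟨h1, h2⟩
    · exact Or.inl ((G.sum H).adj_symm h)
    · exact Or.inr (Or.inr ⟨h2, h1⟩)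
    · exact Or.inr (Or.inl ⟨h2, h1⟩)
  loopless.irrefl u := by cases u <;> simp [SimpleGraph.sum]

/-- The star with `m` leaves (a graph on `m + 1` vertices). -/
def starGraph (m : ℕ) : SimpleGraph (Fin 1 ⊕ Fin m) :=
  completeBipartiteGraph (Fin 1) (Fin m)

/-!
The path `P_{2ℓ}` has a matching of `ℓ` edges and a star has one edge, so
`k₁P_{2ℓ} ∪ k₂S_{2ℓ-1}` has a matching of size `ℓk₁ + k₂`. Every edge of `K_m ∨ K̄_r` meets the
clique, so an embedded matching uses a distinct clique vertex on each of its edges and has at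
most `m = ℓk₁ + k₂ - 1` edges.
-/

def matchingGraph (ι : Type*) : SimpleGraph (ι × Fin 2) where
  Adj u v := u.1 = v.1 ∧ u.2 ≠ v.2
  symm.symm _ _ h := ⟨h.1.symm, h.2.symm⟩
  loopless.irrefl _ h := h.2 rfl

@[simp]
theorem matchingGraph_adj {ι : Type*} {u v : ι × Fin 2} :
    (matchingGraph ι).Adj u v ↔ u.1 = v.1 ∧ u.2 ≠ v.2 := Iff.rfl

section Contains

variable {U V W : Type*} {F : SimpleGraph U} {G : SimpleGraph V} {H : SimpleGraph W}

theorem Contains.trans (hGH : Contains G H) (hHF : Contains H F) : Contains G F := by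
  obtain ⟨f, hf⟩ := hGH
  obtain ⟨g, hg⟩ := hHF
  exact ⟨f.comp g, hf.comp hg⟩

theorem Contains.sum {V' W' : Type*} {G' : SimpleGraph V'} {H' : SimpleGraph W'}
    (hG : Contains G H) (hG' : Contains G' H') : Contains (G ⊕g G') (H ⊕g H') := by
  obtain ⟨f, hf⟩ := hG
  obtain ⟨f', hf'⟩ := hG'
  exact ⟨f.sum f', Sum.map_injective.2 ⟨hf, hf'⟩⟩

end Contains

section Matching

variable {V W : Type*} {ι κ : Type*}

theorem card_le_card_of_contains_matchingGraph [Fintype ι] {G : SimpleGraph V} (s : Finset V)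
    (hs : ∀ x y, G.Adj x y → x ∈ s ∨ y ∈ s) (h : Contains G (matchingGraph ι)) :
    Fintype.card ι ≤ s.card := by
  obtain ⟨f, hf⟩ := h
  have hcover (i : ι) : ∃ j, f (i, j) ∈ s :=
    (hs _ _ (f.map_rel (show (matchingGraph ι).Adj (i, 0) (i, 1) by simp))).elim
      (fun h => ⟨0, h⟩) (fun h => ⟨1, h⟩)
  choose j hj using hcover
  let g : ι → s := fun i => ⟨f (i, j i), hj i⟩
  have hg : Function.Injective g := fun i i' h =>
    congrArg Prod.fst (hf (Subtype.ext_iff.1 h))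
  simpa using Fintype.card_le_of_injective g hg

theorem Contains.copies_matchingGraph {G : SimpleGraph V} (k : ℕ)
    (h : Contains G (matchingGraph ι)) : Contains (copies k G) (matchingGraph (Fin k × ι)) := by
  obtain ⟨f, hf⟩ := h
  refine ⟨⟨fun u => (u.1.1, f (u.1.2, u.2)), fun {u v} ⟨h1, h2⟩ => ⟨?_, f.map_rel ?_⟩⟩, ?_⟩
  · exact (Prod.ext_iff.1 h1).1
  · exact ⟨(Prod.ext_iff.1 h1).2, h2⟩
  · rintro ⟨⟨a, i⟩, j⟩ ⟨⟨a', i'⟩, j'⟩ h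
    obtain ⟨rfl, h⟩ := Prod.mk.inj h
    cases hf h
    rfl

theorem Contains.sum_matchingGraph {G : SimpleGraph V} {H : SimpleGraph W}
    (hG : Contains G (matchingGraph ι)) (hH : Contains H (matchingGraph κ)) :
    Contains (G ⊕g H) (matchingGraph (ι ⊕ κ)) := by
  refine Contains.trans (hG.sum hH) ⟨⟨fun u => u.1.map (·, u.2) (·, u.2), ?_⟩, ?_⟩
  · rintro ⟨a | a, j⟩ ⟨b | b, j'⟩ ⟨hab, hj⟩ <;> simp_all
  · rintro ⟨a | a, j⟩ ⟨b | b, j'⟩ h <;> simp_all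

theorem pathGraph_contains_matchingGraph (ℓ : ℕ) :
    Contains (pathGraph (2 * ℓ)) (matchingGraph (Fin ℓ)) := by
  refine ⟨⟨fun u => ⟨2 * u.1 + u.2, by omega⟩, ?_⟩, ?_⟩
  · rintro ⟨i, j⟩ ⟨i', j'⟩ ⟨rfl, hj⟩
    simp only [pathGraph_adj]
    fin_cases j <;> fin_cases j' <;> simp_all
  · rintro ⟨i, j⟩ ⟨i', j'⟩ h
    simp only [RelHom.coeFn_mk, Fin.mk.injEq] at h
    rw [Prod.mk.injEq, Fin.ext_iff, Fin.ext_iff]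
    omega

theorem starGraph_contains_matchingGraph {m : ℕ} (hm : 0 < m) :
    Contains (_root_.starGraph m) (matchingGraph Unit) := by
  refine ⟨⟨fun u => if u.2 = 0 then .inl 0 else .inr ⟨0, hm⟩, ?_⟩, ?_⟩
  · rintro ⟨_, j⟩ ⟨_, j'⟩ ⟨-, hj⟩
    fin_cases j <;> fin_cases j' <;> simp_all [_root_.starGraph]
  · rintro ⟨_, j⟩ ⟨_, j'⟩ h
    fin_cases j <;> fin_cases j' <;> simp_all [show (1 : Fin 2) ≠ 0 by decide]

end Matching

theorem graphJoin_bot_adj_isLeft {V W : Type*} {G : SimpleGraph V} {x y : V ⊕ W}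
    (h : (graphJoin G (⊥ : SimpleGraph W)).Adj x y) : x.isLeft ∨ y.isLeft := by
  rcases x with x | x <;> rcases y with y | y <;> simp_all [graphJoin]

theorem card_le_card_of_graphJoin_bot_contains_matchingGraph {V W ι : Type*}
    [Fintype V] [Fintype ι] {G : SimpleGraph V}
    (h : Contains (graphJoin G (⊥ : SimpleGraph W)) (matchingGraph ι)) :
    Fintype.card ι ≤ Fintype.card V := by
  refine (card_le_card_of_contains_matchingGraph (Finset.univ.map .inl) ?_ h).trans_eq (by simp)
  intro x y hxy
  simpa only [Finset.mem_map, Finset.mem_univ, true_and, Function.Embedding.inl_apply,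
    eq_comm (b := x), eq_comm (b := y), ← Sum.isLeft_iff] using graphJoin_bot_adj_isLeft hxy

theorem G2_free_general (ℓ k₁ k₂ n : ℕ) (hℓ : 2 ≤ ℓ) (hk₁ : 1 ≤ k₁) :
    ¬ Contains
      (graphJoin (⊤ : SimpleGraph (Fin (ℓ * k₁ + k₂ - 1)))
        (⊥ : SimpleGraph (Fin (n - ℓ * k₁ - k₂ + 1))))
      (copies k₁ (pathGraph (2 * ℓ)) ⊕g copies k₂ (_root_.starGraph (2 * ℓ - 1))) := by
  intro hcontains
  have hmatching := hcontains.trans <|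
    ((pathGraph_contains_matchingGraph ℓ).copies_matchingGraph k₁).sum_matchingGraph
      ((starGraph_contains_matchingGraph (by omega)).copies_matchingGraph k₂)
  have hcard := card_le_card_of_graphJoin_bot_contains_matchingGraph hmatching
  simp only [Fintype.card_sum, Fintype.card_prod, Fintype.card_fin, Fintype.card_unit] at hcard
  have hℓk₁ : 2 * 1 ≤ ℓ * k₁ := Nat.mul_le_mul hℓ hk₁
  rw [Nat.mul_comm k₁] at hcard
  omega

/-- `K_{ℓk₁+k₂-1} ∨ K̄_{n-ℓk₁-k₂+1}` contains no copy of `k₁ P_{2ℓ} ∪ k₂ S_{2ℓ-1}`. -/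
theorem G2_free (ℓ k₁ k₂ n : ℕ) (hℓ : 2 ≤ ℓ) (hk₁ : 1 ≤ k₁)
    (hn : ℓ * k₁ + k₂ - 1 ≤ n) :
    ¬ Contains
      (graphJoin (⊤ : SimpleGraph (Fin (ℓ * k₁ + k₂ - 1)))
        (⊥ : SimpleGraph (Fin (n - ℓ * k₁ - k₂ + 1))))
      (copies k₁ (pathGraph (2 * ℓ)) ⊕g copies k₂ (_root_.starGraph (2 * ℓ - 1))) :=
  G2_free_general ℓ k₁ k₂ n hℓ hk₁
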